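/- Let S be a cartesian category, X: S^op → sSet a diagram of simplicial sets, and k ≥ 2 a natural number. If X(s) is a k-coskeletal simplicial set for every object s of S, then the simplicial Grothendieck construction ∫_S X is k-coskeletal. -/

import Mathlib

/-!
An `n`-simplex of `∫_S X` is a chain `t` in the nerve of `S` together with simplices `x r` in
the fibres `X(t_{r 0})`. Given a compatible family of simplices of dimension at most `k` over
`Δ[n]`, their chains glue to a unique chain `t`, because the nerve of `S` is `2`-coskeletal and
`k ≥ 2`. Over `t`, the faces of dimension at most `k` of each component `x r` are prescribed
(they are the given simplices transported along the arrows of `t`), so the coskeletality of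
`X(t_{r 0})` determines `x r` uniquely; the compatibilities required of the result reduce to the
composition law of `t`.
-/

open CategoryTheory Opposite SimplexCategory

universe v u

variable (S : Type u) [Category.{v} S]

/-- An `n`-simplex of the nerve of `S`: a chain of composable arrows
`t₀ ⟶ t₁ ⟶ ⋯ ⟶ tₙ` in `S` (recorded functorially). -/
structure NerveChain (n : SimplexCategory) : Type (max u v) where
  vertex : Fin (n.len + 1) → S
  arrow : ∀ i j : Fin (n.len + 1), i ≤ j → (vertex i ⟶ vertex j)
  arrow_refl : ∀ (i) (h : i ≤ i), arrow i i h = 𝟙 _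
  arrow_trans : ∀ (i j k) (hij : i ≤ j) (hjk : j ≤ k) (hik : i ≤ k),
    arrow i k hik = arrow i j hij ≫ arrow j k hjk

variable {S}

/-- Restriction of a chain along a simplicial operator. -/
def NerveChain.pull {n m : SimplexCategory} (g : m ⟶ n) (t : NerveChain S n) :
    NerveChain S m where
  vertex i := t.vertex (g.toOrderHom i)
  arrow i j h := t.arrow _ _ (g.toOrderHom.monotone h)
  arrow_refl i h := t.arrow_refl _ _
  arrow_trans i j k hij hjk hik := t.arrow_trans _ _ _ _ _ _

variable (S)

/-- An `n`-simplex of the simplicial Grothendieck construction `∫_S X`: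
a pair `(t, x)` where `t` is an `n`-simplex of the nerve of `S` and `x` is a
compatible family with `x r ∈ X(in(r^* t))ₘ` for every `r : [m] ⟶ [n]`,
`in(−)` denoting the source object of a chain. -/
structure GrothSimplex (X : Sᵒᵖ ⥤ SSet.{max u v}) (n : SimplexCategory) :
    Type (max u v) where
  t : NerveChain S n
  x : ∀ (m : SimplexCategory) (r : m ⟶ n),
    (X.obj (op (t.vertex (r.toOrderHom 0)))).obj (op m)
  compat : ∀ (m m' : SimplexCategory) (α : m' ⟶ m) (r : m ⟶ n)
      (hle : r.toOrderHom 0 ≤ (α ≫ r).toOrderHom 0),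
    (X.obj (op (t.vertex (r.toOrderHom 0)))).map α.op (x m r) =
      (X.map (t.arrow (r.toOrderHom 0) ((α ≫ r).toOrderHom 0) hle).op).app (op m')
        (x m' (α ≫ r))

theorem GrothSimplex.ext_aux {X : Sᵒᵖ ⥤ SSet.{max u v}} {n : SimplexCategory}
    {a b : GrothSimplex S X n} (ht : a.t = b.t)
    (hx : ∀ m r, HEq (a.x m r) (b.x m r)) : a = b := by
  obtain ⟨ta, xa, ca⟩ := a; obtain ⟨tb, xb, cb⟩ := b
  dsimp at ht
  cases ht
  have : xa = xb := by
    funext m r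
    exact eq_of_heq (hx m r)
  cases this
  rfl

/-- The simplicial Grothendieck construction `∫_S X` of a diagram of
simplicial sets `X : Sᵒᵖ ⥤ sSet`. -/
def grothS (X : Sᵒᵖ ⥤ SSet.{max u v}) : SSet.{max u v} where
  obj n := GrothSimplex S X n.unop
  map {n n'} g := TypeCat.ofHom fun a =>
    { t := a.t.pull g.unop
      x := fun m r => a.x m (r ≫ g.unop)
      compat := fun m m' α r hle =>
        a.compat m m' α (r ≫ g.unop) (g.unop.toOrderHom.monotone hle) }
  map_id n := by
    ext a
    exact GrothSimplex.ext_aux S rfl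
      (fun m r => congr_arg_heq (a.x m) (Category.comp_id r))
  map_comp g g' := by
    ext a
    exact GrothSimplex.ext_aux S rfl
      (fun m r => congr_arg_heq (a.x m) (Category.assoc r g'.unop g.unop).symm)

universe w

namespace SSet

open SimplicialObject.Truncated Limits Functor

variable {Y : SSet.{w}} {k : ℕ} {n : SimplexCategory}

/-- The data of a map `trₖ Δ[n] ⟶ trₖ Y` of `k`-truncated simplicial sets. -/
def IsCompatibleFamily (Y : SSet.{w}) (k : ℕ) (n : SimplexCategory)
    (f : ∀ p : SimplexCategory, p.len ≤ k → (p ⟶ n) → Y.obj (op p)) : Prop :=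
  ∀ p hp q hq (g : q ⟶ p) (b : p ⟶ n), Y.map g.op (f p hp b) = f q hq (g ≫ b)

theorem nonempty_isLimit_coneAt_iff :
    Nonempty (IsLimit ((rightExtensionInclusion Y k).coneAt (op n))) ↔
      ∀ f, Y.IsCompatibleFamily k n f →
        ∃! y : Y.obj (op n), ∀ p (hp : p.len ≤ k) (b : p ⟶ n), Y.map b.op y = f p hp b := by
  let arrow {p : SimplexCategory} (hp : p.len ≤ k) (b : p ⟶ n) :
      StructuredArrow (op n) (Truncated.inclusion k).op :=
    StructuredArrow.mk (Y := op (⟨p, hp⟩ : SimplexCategory.Truncated k)) b.op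
  let arrowHom {p q : SimplexCategory} (hp : p.len ≤ k) (hq : q.len ≤ k) (g : q ⟶ p)
      (b : p ⟶ n) : arrow hp b ⟶ arrow hq (g ≫ b) :=
    StructuredArrow.homMk (ObjectProperty.homMk g :
      (⟨q, hq⟩ : SimplexCategory.Truncated k) ⟶ ⟨p, hp⟩).op rfl
  rw [Types.isLimit_iff]
  constructor
  · intro hlim f hf
    obtain ⟨y, hy, hy_unique⟩ := hlim (fun j => f _ j.right.unop.property j.hom.unop)
      fun {j j'} φ => by
        have hφ : j'.hom.unop = φ.right.unop.hom ≫ j.hom.unop := by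
          rw [← StructuredArrow.w φ]; rfl
        dsimp
        rw [hφ]
        exact hf _ _ _ _ _ _
    exact ⟨y, fun p hp b => hy (arrow hp b),
      fun y' hy' => hy_unique y' fun j => hy' _ j.right.unop.property j.hom.unop⟩
  · intro hfam s hs
    obtain ⟨y, hy, hy_unique⟩ := hfam (fun p hp b => s (arrow hp b))
      fun p hp q hq g b => hs (arrowHom hp hq g b)
    exact ⟨y, fun j => hy _ j.right.unop.property j.hom.unop,
      fun y' hy' => hy_unique y' fun p hp b => hy' (arrow hp b)⟩

theorem isCoskeletal_iff_existsUnique (Y : SSet.{w}) (k : ℕ) :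
    Y.IsCoskeletal k ↔ ∀ n f, Y.IsCompatibleFamily k n f →
      ∃! y : Y.obj (op n), ∀ p (hp : p.len ≤ k) (b : p ⟶ n), Y.map b.op y = f p hp b := by
  simp only [← nonempty_isLimit_coneAt_iff]
  refine ⟨fun _ n => ⟨isPointwiseRightKanExtensionOfIsRightKanExtension _ (𝟙 _) (op n)⟩,
    fun h => ⟨?_⟩⟩
  have hpw : (rightExtensionInclusion Y k).IsPointwiseRightKanExtension :=
    fun Z => (h Z.unop).some
  exact hpw.isRightKanExtension

end SSet

namespace CategoryTheory.SimplicialObject.IsCoskeletal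

open SSet

variable {Y : SSet.{w}} {k : ℕ} {n : SimplexCategory}

theorem existsUnique (hY : Y.IsCoskeletal k)
    {f : ∀ p : SimplexCategory, p.len ≤ k → (p ⟶ n) → Y.obj (op p)}
    (hf : Y.IsCompatibleFamily k n f) :
    ∃! y : Y.obj (op n), ∀ p (hp : p.len ≤ k) (b : p ⟶ n), Y.map b.op y = f p hp b :=
  (isCoskeletal_iff_existsUnique Y k).mp hY n f hf

noncomputable def amalgamate (hY : Y.IsCoskeletal k)
    (f : ∀ p : SimplexCategory, p.len ≤ k → (p ⟶ n) → Y.obj (op p))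
    (hf : Y.IsCompatibleFamily k n f) : Y.obj (op n) :=
  (hY.existsUnique hf).exists.choose

theorem map_amalgamate (hY : Y.IsCoskeletal k)
    {f : ∀ p : SimplexCategory, p.len ≤ k → (p ⟶ n) → Y.obj (op p)}
    (hf : Y.IsCompatibleFamily k n f) {p : SimplexCategory} (hp : p.len ≤ k) (b : p ⟶ n) :
    Y.map b.op (hY.amalgamate f hf) = f p hp b :=
  (hY.existsUnique hf).exists.choose_spec p hp b

theorem ext (hY : Y.IsCoskeletal k) {y y' : Y.obj (op n)}
    (h : ∀ p, p.len ≤ k → ∀ b : p ⟶ n, Y.map b.op y = Y.map b.op y') : y = y' :=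
  (hY.existsUnique (f := fun _ _ b => Y.map b.op y')
    fun _ _ _ _ g b => (Functor.map_comp_apply Y b.op g.op y').symm).unique h
    fun _ _ _ => rfl

theorem of_le (hY : Y.IsCoskeletal k) {l : ℕ} (hkl : k ≤ l) : Y.IsCoskeletal l := by
  refine (isCoskeletal_iff_existsUnique Y l).mpr fun n f hf => ?_
  obtain ⟨y, hy, hy_uniq⟩ := hY.existsUnique (f := fun p hp b => f p (hp.trans hkl) b)
    fun p hp q hq => hf p (hp.trans hkl) q (hq.trans hkl)
  refine ⟨y, fun p hp b => hY.ext fun q hq c => ?_,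
    fun y' hy' => hy_uniq y' fun p hp => hy' p _⟩
  rw [← Functor.map_comp_apply, ← op_comp, hy q hq, hf]

end CategoryTheory.SimplicialObject.IsCoskeletal

namespace NerveChain

variable {S} {n : SimplexCategory}

def toFunctor (t : NerveChain S n) : Fin (n.len + 1) ⥤ S where
  obj := t.vertex
  map f := t.arrow _ _ (leOfHom f)
  map_id i := t.arrow_refl i _
  map_comp _ _ := t.arrow_trans _ _ _ _ _ _

def ofFunctor (F : Fin (n.len + 1) ⥤ S) : NerveChain S n where
  vertex := F.obj
  arrow _ _ h := F.map (homOfLE h)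
  arrow_refl i _ := F.map_id i
  arrow_trans _ _ _ _ _ _ := F.map_comp _ _

variable (S n) in
def equivNerve : NerveChain S n ≃ (nerve S).obj (op n) where
  toFun := toFunctor
  invFun := ofFunctor
  left_inv _ := by rfl
  right_inv _ := by rfl

theorem equivNerve_pull {m : SimplexCategory} (g : m ⟶ n) (t : NerveChain S n) :
    equivNerve S m (t.pull g) = (nerve S).map g.op (equivNerve S n t) := by
  rfl

theorem existsUnique_pull_eq {k : ℕ} (hk : 2 ≤ k)
    (c : ∀ p : SimplexCategory, p.len ≤ k → (p ⟶ n) → NerveChain S p)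
    (hc : ∀ p hp q hq (g : q ⟶ p) (b : p ⟶ n), (c p hp b).pull g = c q hq (g ≫ b)) :
    ∃! t : NerveChain S n, ∀ p (hp : p.len ≤ k) (b : p ⟶ n), t.pull b = c p hp b := by
  have hnerve : (nerve S).IsCoskeletal 2 := inferInstance
  refine ((equivNerve S n).existsUnique_congr fun t => forall_congr' fun p =>
    forall_congr' fun hp => forall_congr' fun b => ?_).mpr
      ((hnerve.of_le hk).existsUnique (f := fun p hp b => equivNerve S p (c p hp b))
        fun p hp q hq g b => ?_)
  · rw [← equivNerve_pull, Equiv.apply_eq_iff_eq]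
  · rw [← equivNerve_pull, hc]

end NerveChain

namespace GrothSimplex

variable {S} {X : Sᵒᵖ ⥤ SSet.{max u v}} {n : SimplexCategory}

def copy (σ : GrothSimplex S X n) (t : NerveChain S n) (h : σ.t = t) : GrothSimplex S X n where
  t := t
  x := h ▸ σ.x
  compat := by subst h; exact σ.compat

theorem copy_eq (σ : GrothSimplex S X n) (t : NerveChain S n) (h : σ.t = t) :
    σ.copy t h = σ := by
  subst h; rfl

def top (σ : GrothSimplex S X n) : (X.obj (op (σ.t.vertex 0))).obj (op n) :=
  σ.x n (𝟙 n)

theorem x_eq_top_map (σ : GrothSimplex S X n) {m : SimplexCategory} (r : m ⟶ n) :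
    σ.x m r = ((grothS S X).map r.op σ).top :=
  eq_of_heq (congr_arg_heq (σ.x m) (Category.id_comp r).symm)

theorem map_top (σ : GrothSimplex S X n) {m : SimplexCategory} (g : m ⟶ n) :
    (X.obj (op (σ.t.vertex 0))).map g.op σ.top =
      (X.map (σ.t.arrow 0 (g.toOrderHom 0) (Fin.zero_le _)).op).app (op m) (σ.x m g) := by
  have h := σ.compat n m g (𝟙 n) (Fin.zero_le _)
  rwa [Category.comp_id] at h

theorem map_arrow_map_arrow (t : NerveChain S n) {i j l : Fin (n.len + 1)} (hij : i ≤ j)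
    (hjl : j ≤ l) {m : SimplexCategoryᵒᵖ} (z : (X.obj (op (t.vertex l))).obj m) :
    (X.map (t.arrow i j hij).op).app m ((X.map (t.arrow j l hjl).op).app m z) =
      (X.map (t.arrow i l (hij.trans hjl)).op).app m z := by
  rw [t.arrow_trans i j l hij hjl, op_comp, X.map_comp]; rfl

theorem eq_of_map_eq {k : ℕ} (hX : ∀ s : S, (X.obj (op s)).IsCoskeletal k)
    {σ τ : GrothSimplex S X n} (ht : σ.t = τ.t)
    (h : ∀ p, p.len ≤ k → ∀ b : p ⟶ n, (grothS S X).map b.op σ = (grothS S X).map b.op τ) :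
    σ = τ := by
  obtain ⟨t, x, hx⟩ := σ
  obtain ⟨t', x', hx'⟩ := τ
  obtain rfl : t = t' := ht
  obtain rfl : x = x' := by
    funext m r
    refine (hX _).ext fun p hp b => ?_
    have hface : x p (b ≫ r) = x' p (b ≫ r) := by
      have h₁ := x_eq_top_map (⟨t, x, hx⟩ : GrothSimplex S X n) (b ≫ r)
      have h₂ := x_eq_top_map (⟨t, x', hx'⟩ : GrothSimplex S X n) (b ≫ r)
      have h₁₂ := congr_arg_heq top (h p hp (b ≫ r))
      exact h₁.trans ((eq_of_heq h₁₂).trans h₂.symm)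
    have hle := r.toOrderHom.monotone (Fin.zero_le (b.toOrderHom 0))
    rw [hx m p b r hle, hx' m p b r hle, hface]
  rfl

section Amalgamation

variable {k : ℕ} (t : NerveChain S n)
  (f : ∀ p : SimplexCategory, p.len ≤ k → (p ⟶ n) → GrothSimplex S X p)
  (ht : ∀ p hp b, (f p hp b).t = t.pull b)

/-- `f p hp b` with its chain replaced by `t.pull b`, so that its components lie definitionally in
the fibres of `X` over the vertices of `t`. -/
def overChain (p : SimplexCategory) (hp : p.len ≤ k) (b : p ⟶ n) : GrothSimplex S X p :=
  (f p hp b).copy (t.pull b) (ht p hp b)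

variable {t f ht} in
theorem x_overChain (hf : (grothS S X).IsCompatibleFamily k n f) {p q : SimplexCategory}
    (hp : p.len ≤ k) (hq : q.len ≤ k) (g : q ⟶ p) (b : p ⟶ n) :
    (overChain t f ht p hp b).x q g = (overChain t f ht q hq (g ≫ b)).top := by
  have h : (grothS S X).map g.op (overChain t f ht p hp b) = overChain t f ht q hq (g ≫ b) := by
    simp only [overChain, copy_eq]
    exact hf p hp q hq g b
  exact (x_eq_top_map _ g).trans (eq_of_heq (congr_arg_heq top h))

variable {t f ht} in
theorem map_top_overChain (hf : (grothS S X).IsCompatibleFamily k n f) {p q : SimplexCategory}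
    (hp : p.len ≤ k) (hq : q.len ≤ k) (g : q ⟶ p) (b : p ⟶ n) :
    (X.obj (op (t.vertex (b.toOrderHom 0)))).map g.op (overChain t f ht p hp b).top =
      (X.map (t.arrow _ _ (b.toOrderHom.monotone (Fin.zero_le (g.toOrderHom 0)))).op).app (op q)
        (overChain t f ht q hq (g ≫ b)).top :=
  (map_top _ g).trans (congrArg _ (x_overChain hf hp hq g b))

def amalgamFamily (m : SimplexCategory) (r : m ⟶ n) (p : SimplexCategory) (hp : p.len ≤ k)
    (b : p ⟶ m) : (X.obj (op (t.vertex (r.toOrderHom 0)))).obj (op p) :=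
  (X.map (t.arrow _ _ (r.toOrderHom.monotone (Fin.zero_le (b.toOrderHom 0)))).op).app (op p)
    (overChain t f ht p hp (b ≫ r)).top

theorem isCompatibleFamily_amalgamFamily (hf : (grothS S X).IsCompatibleFamily k n f)
    (m : SimplexCategory) (r : m ⟶ n) :
    (X.obj (op (t.vertex (r.toOrderHom 0)))).IsCompatibleFamily k m
      (amalgamFamily t f ht m r) := by
  intro p hp q hq g b
  exact (NatTrans.naturality_apply _ _ _).symm.trans <|
    (congrArg _ (map_top_overChain hf hp hq g (b ≫ r))).trans (map_arrow_map_arrow t _ _ _)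

variable (hX : ∀ s : S, (X.obj (op s)).IsCoskeletal k)
  (hf : (grothS S X).IsCompatibleFamily k n f)

noncomputable def amalgam : GrothSimplex S X n where
  t := t
  x m r := (hX _).amalgamate (amalgamFamily t f ht m r)
    (isCompatibleFamily_amalgamFamily t f ht hf m r)
  compat m m' α r hle := (hX _).ext fun p hp b => by
    refine ((Functor.map_comp_apply _ _ _ _).symm.trans ((hX _).map_amalgamate
      (isCompatibleFamily_amalgamFamily t f ht hf m r) hp (b ≫ α))).trans ?_
    refine Eq.trans ?_ (NatTrans.naturality_apply (X.map (t.arrow _ _ hle).op) b.op _)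
    exact (map_arrow_map_arrow t _ _ _).symm.trans (congrArg _ ((hX _).map_amalgamate
      (isCompatibleFamily_amalgamFamily t f ht hf m' (α ≫ r)) hp b).symm)

theorem map_amalgam (p : SimplexCategory) (hp : p.len ≤ k) (b : p ⟶ n) :
    (grothS S X).map b.op (amalgam t f ht hX hf) = f p hp b := by
  rw [← copy_eq (f p hp b) (t.pull b) (ht p hp b)]
  refine ext_aux S rfl fun m r => heq_of_eq ((hX _).ext fun q hq c => ?_)
  have hle := r.toOrderHom.monotone (Fin.zero_le (c.toOrderHom 0))
  exact ((hX _).map_amalgamate (isCompatibleFamily_amalgamFamily t f ht hf m (r ≫ b)) hq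
    c).trans ((congrArg _ (x_overChain hf hp hq (c ≫ r) b)).symm.trans
      ((overChain t f ht p hp b).compat m q c r hle).symm)

end Amalgamation

end GrothSimplex

open Limits in
theorem grothS_isCoskeletal (X : Sᵒᵖ ⥤ SSet.{max u v})
    (k : ℕ) (hk : 2 ≤ k)
    (h : ∀ s : S, SimplicialObject.IsCoskeletal (X.obj (op s)) k) :
    SimplicialObject.IsCoskeletal (grothS S X) k := by
  refine (SSet.isCoskeletal_iff_existsUnique _ k).mpr fun n f hf => ?_
  obtain ⟨t, ht, ht_unique⟩ := NerveChain.existsUnique_pull_eq hk (fun p hp b => (f p hp b).t)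
    fun p hp q hq g b => congrArg GrothSimplex.t (hf p hp q hq g b)
  have hft : ∀ p hp b, (f p hp b).t = t.pull b := fun p hp b => (ht p hp b).symm
  have hσ := GrothSimplex.map_amalgam t f hft h hf
  refine ⟨_, hσ, fun τ hτ => GrothSimplex.eq_of_map_eq h ?_
    fun p hp b => (hτ p hp b).trans (hσ p hp b).symm⟩
  exact ht_unique τ.t fun p hp b => congrArg GrothSimplex.t (hτ p hp b)
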